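/- arXiv:math/0211406 — 6 statements merged into one kernel-verified Lean document; each statement's English description precedes it below -/
import Mathlib

section
/- For every positive integer n, the alternating sum over i from 1 to n of the Gaussian binomial coefficient [n choose i]_q times (-1)^(i-1) q^(binom(i+1,2)) / (1 - q^i) equals the sum over i from 1 to n of q^i/(1-q^i). (Van Hamme's identity.) -/
/-- The q-Pochhammer symbol `(z;q)_n = (1-z)(1-zq)⋯(1-zq^{n-1})`. -/
def qPoch {K : Type*} [Field K] (z q : K) (n : ℕ) : K :=
  ∏ j ∈ Finset.range n, (1 - z * q ^ j)

/-- The Gaussian binomial coefficient `[n choose i]_q`. -/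
def gauss {K : Type*} [Field K] (q : K) (n i : ℕ) : K :=
  qPoch q q n / (qPoch q q i * qPoch q q (n - i))

namespace VH
variable {K : Type*} [Field K]

/-- `gauss` extended by zero above the diagonal. -/
def gaussE (q : K) (n i : ℕ) : K := if i ≤ n then gauss q n i else 0

lemma qPoch_zero (z q : K) : qPoch z q 0 = 1 := Finset.prod_range_zero _

lemma qPoch_succ (z q : K) (n : ℕ) :
    qPoch z q (n+1) = qPoch z q n * (1 - z * q ^ n) := Finset.prod_range_succ _ _

lemma qPoch_succ' (z q : K) (n : ℕ) :
    qPoch z q (n+1) = (1 - z) * qPoch (z*q) q n := by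
  rw [qPoch, Finset.prod_range_succ', qPoch, mul_comm]
  congr 1
  · simp
  · exact Finset.prod_congr rfl fun j _ => by rw [pow_succ']; ring

lemma qPoch_ne_zero {z q : K} {n : ℕ} (h : ∀ k, k < n → z * q ^ k ≠ 1) :
    qPoch z q n ≠ 0 := by
  rw [qPoch]
  exact Finset.prod_ne_zero_iff.2 fun j hj =>
    sub_ne_zero.2 (Ne.symm (h j (Finset.mem_range.1 hj)))

lemma Qne {q : K} {m : ℕ} (hq : ∀ i, 1 ≤ i → i ≤ m → q ^ i ≠ 1) :
    qPoch q q m ≠ 0 :=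
  qPoch_ne_zero fun k hk => by
    have := hq (k+1) (by omega) (by omega)
    rwa [pow_succ'] at this

lemma gauss_diag (q : K) (n : ℕ) (h : qPoch q q n ≠ 0) : gauss q n n = 1 := by
  rw [gauss, Nat.sub_self, qPoch_zero, mul_one, div_self h]

lemma gauss_zero' (q : K) (n : ℕ) (h : qPoch q q n ≠ 0) : gauss q n 0 = 1 := by
  rw [gauss, Nat.sub_zero, qPoch_zero, one_mul, div_self h]

lemma pascal_core (q : K) (a b : ℕ) (hQa : qPoch q q a ≠ 0) (hQb : qPoch q q b ≠ 0)
    (hA : (1:K) - q ^ (a+1) ≠ 0) (hB : (1:K) - q ^ (b+1) ≠ 0) :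
    gauss q (a+b+2) (a+1) = gauss q (a+b+1) (a+1) + q^(b+1) * gauss q (a+b+1) a := by
  have e1 : a + b + 2 - (a+1) = b + 1 := by omega
  have e2 : a + b + 1 - (a+1) = b := by omega
  have e3 : a + b + 1 - a = b + 1 := by omega
  rw [gauss, gauss, gauss, e1, e2, e3]
  have hA' : (1:K) - q * q ^ a ≠ 0 := by rwa [← pow_succ'] 
  have hB' : (1:K) - q * q ^ b ≠ 0 := by rwa [← pow_succ']
  rw [show a+b+2 = (a+b+1)+1 by omega, qPoch_succ q q (a+b+1),
      qPoch_succ q q a, qPoch_succ q q b]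
  field_simp
  ring

lemma pascalE (q : K) (m i : ℕ) (hi : 1 ≤ i)
    (hq : ∀ k, 1 ≤ k → k ≤ m+1 → q ^ k ≠ 1) :
    gaussE q (m+1) i = gaussE q m i + q^(m+1-i) * gaussE q m (i-1) := by
  have hq' : ∀ k, 1 ≤ k → k ≤ m → q ^ k ≠ 1 := fun k h1 h2 => hq k h1 (by omega)
  rcases lt_trichotomy i (m+1) with h | h | h
  · -- 1 ≤ i ≤ m
    obtain ⟨a, rfl⟩ : ∃ a, i = a + 1 := ⟨i - 1, by omega⟩
    obtain ⟨b, rfl⟩ : ∃ b, m = a + b + 1 := ⟨m - a - 1, by omega⟩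
    have e0 : a + b + 1 + 1 = a + b + 2 := by omega
    have e1 : a + b + 1 + 1 - (a + 1) = b + 1 := by omega
    have e2 : a + 1 - 1 = a := by omega
    rw [gaussE, gaussE, gaussE, if_pos (by omega), if_pos (by omega), if_pos (by omega),
        e0, e1, e2]
    exact pascal_core q a b
      (Qne fun k h1 h2 => hq' k h1 (by omega))
      (Qne fun k h1 h2 => hq' k h1 (by omega))
      (sub_ne_zero.2 (Ne.symm (hq (a+1) (by omega) (by omega))))
      (sub_ne_zero.2 (Ne.symm (hq (b+1) (by omega) (by omega))))
  · subst h
    rw [gaussE, gaussE, gaussE, if_pos le_rfl, if_neg (by omega), if_pos (by omega),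
        Nat.sub_self, pow_zero, Nat.add_sub_cancel]
    rw [gauss_diag q (m+1) (Qne hq), gauss_diag q m (Qne hq')]
    ring
  · rw [gaussE, gaussE, gaussE, if_neg (by omega), if_neg (by omega), if_neg (by omega)]
    ring

lemma tri (j : ℕ) : (j+1)*(j+2)/2 = j*(j+1)/2 + (j+1) := by
  rw [show (j+1)*(j+2) = j*(j+1) + (j+1)*2 by ring, Nat.add_mul_div_right _ _ two_pos]

lemma sumS (q : K) (m : ℕ) :
    ∀ x : K, (∀ k, k ≤ m → x * q ^ k ≠ 1) → (∀ i, 1 ≤ i → i ≤ m → q ^ i ≠ 1) →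
    ∑ j ∈ Finset.range (m+1),
        (-1:K)^j * gaussE q m j * q^(j*(j+1)/2) / (1 - x*q^j)
      = qPoch q q m / qPoch x q (m+1) := by
  induction m with
  | zero =>
    intro x hx _
    simp [gaussE, gauss, qPoch]
  | succ m ih =>
    intro x hx hq
    have hq' : ∀ i, 1 ≤ i → i ≤ m → q ^ i ≠ 1 := fun k h1 h2 => hq k h1 (by omega)
    have hx' : ∀ k, k ≤ m → x * q ^ k ≠ 1 := fun k hk => hx k (by omega)
    have hxq : ∀ k, k ≤ m → (x*q) * q ^ k ≠ 1 := fun k hk => by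
      have := hx (k+1) (by omega)
      rwa [pow_succ', ← mul_assoc] at this
    rw [Finset.sum_range_succ']
    have hsplit : ∀ j ∈ Finset.range (m+1),
        (-1:K)^(j+1) * gaussE q (m+1) (j+1) * q^((j+1)*((j+1)+1)/2) / (1 - x*q^(j+1))
          = (-1:K)^(j+1) * gaussE q m (j+1) * q^((j+1)*((j+1)+1)/2) / (1 - x*q^(j+1))
            + -(q^(m+1) * ((-1:K)^j * gaussE q m j * q^(j*(j+1)/2) / (1 - (x*q)*q^j))) := by
      intro j hj
      have hjm : j ≤ m := Nat.lt_succ_iff.1 (Finset.mem_range.1 hj)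
      have hp := pascalE q m (j+1) (by omega) hq
      have em : m + 1 - (j+1) = m - j := by omega
      have ej : j + 1 - 1 = j := by omega
      rw [hp, em, ej]
      have key : q^(m-j) * q^((j+1)*(j+2)/2) = q^(m+1) * q^(j*(j+1)/2) := by
        rw [← pow_add, ← pow_add, tri]
        congr 1
        generalize j*(j+1)/2 = T
        omega
      have hD : (1:K) - x*q*q^j = 1 - x*q^(j+1) := by rw [pow_succ']; ring
      rw [hD]
      rw [show -(q^(m+1) * ((-1:K)^j * gaussE q m j * q^(j*(j+1)/2) / (1 - x*q^(j+1))))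
            = (-(q^(m+1) * ((-1:K)^j * gaussE q m j * q^(j*(j+1)/2)))) / (1 - x*q^(j+1)) by
          ring]
      rw [← add_div]
      congr 1
      rw [show (j+1)+1 = j+2 from rfl]
      linear_combination (-(-1:K)^j * gaussE q m j) * key
    rw [Finset.sum_congr rfl hsplit, Finset.sum_add_distrib, add_right_comm]
    have h0 : (-1:K)^0 * gaussE q (m+1) 0 * q^(0*(0+1)/2) / (1 - x*q^0)
        = (-1:K)^0 * gaussE q m 0 * q^(0*(0+1)/2) / (1 - x*q^0) := by
      rw [gaussE, gaussE, if_pos (by omega), if_pos (by omega),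
          gauss_zero' q (m+1) (Qne hq), gauss_zero' q m (Qne hq')]
    rw [h0, ← Finset.sum_range_succ'
        (fun j => (-1:K)^j * gaussE q m j * q^(j*(j+1)/2) / (1 - x*q^j)) (m+1),
      Finset.sum_range_succ,
        show gaussE q m (m+1) = 0 by rw [gaussE, if_neg (by omega)]]
    rw [ih x hx' hq']
    simp only [mul_zero, zero_mul, zero_div, add_zero]
    rw [show (∑ j ∈ Finset.range (m+1),
          -(q^(m+1) * ((-1:K)^j * gaussE q m j * q^(j*(j+1)/2) / (1 - (x*q)*q^j))))
        = -(q^(m+1) * ∑ j ∈ Finset.range (m+1),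
            ((-1:K)^j * gaussE q m j * q^(j*(j+1)/2) / (1 - (x*q)*q^j))) by
      rw [Finset.mul_sum, ← Finset.sum_neg_distrib]]
    rw [ih (x*q) hxq hq']
    -- final algebra
    have hP1 : qPoch x q (m+2) = qPoch x q (m+1) * (1 - x*q^(m+1)) := qPoch_succ x q (m+1)
    have hP2 : qPoch x q (m+2) = (1-x) * qPoch (x*q) q (m+1) := qPoch_succ' x q (m+1)
    have hQ : qPoch q q (m+2) = qPoch q q (m+1) * (1 - q*q^(m+1)) := qPoch_succ q q (m+1)
    have hn1 : qPoch x q (m+1) ≠ 0 :=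
      qPoch_ne_zero fun k hk => hx k (by omega)
    have hn2 : qPoch (x*q) q (m+1) ≠ 0 :=
      qPoch_ne_zero fun k hk => hxq k (by omega)
    rw [hP1] at hP2
    rw [show m+1+1 = m+2 from rfl, hP1, qPoch_succ q q m]
    have hd1 : (1:K) - x*q^(m+1) ≠ 0 := sub_ne_zero.2 (Ne.symm (hx (m+1) le_rfl))
    rw [show -(q^(m+1) * (qPoch q q m / qPoch (x*q) q (m+1)))
          = (-(q^(m+1) * qPoch q q m)) / qPoch (x*q) q (m+1) by ring]
    rw [div_add_div _ _ hn1 hn2, div_eq_div_iff (mul_ne_zero hn1 hn2) (mul_ne_zero hn1 hd1)]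
    linear_combination (-(q^(m+1)) * qPoch q q m * qPoch x q (m+1)) * hP2

lemma main_lemma (q : K) (n : ℕ) (hq : ∀ i, 1 ≤ i → i ≤ n → q ^ i ≠ 1) :
    ∑ j ∈ Finset.range n,
        gaussE q n (j+1) * (-1:K)^j * q^((j+1)*((j+1)+1)/2) / (1 - q^(j+1))
      = ∑ j ∈ Finset.range n, q^(j+1) / (1 - q^(j+1)) := by
  induction n with
  | zero => simp
  | succ n ih =>
    have hq' : ∀ i, 1 ≤ i → i ≤ n → q ^ i ≠ 1 := fun k h1 h2 => hq k h1 (by omega)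
    have hsplit : ∀ j ∈ Finset.range (n+1),
        gaussE q (n+1) (j+1) * (-1:K)^j * q^((j+1)*((j+1)+1)/2) / (1 - q^(j+1))
          = gaussE q n (j+1) * (-1:K)^j * q^((j+1)*((j+1)+1)/2) / (1 - q^(j+1))
            + q^(n+1) * ((-1:K)^j * gaussE q n j * q^(j*(j+1)/2) / (1 - q*q^j)) := by
      intro j hj
      have hjn : j ≤ n := Nat.lt_succ_iff.1 (Finset.mem_range.1 hj)
      have hp := pascalE q n (j+1) (by omega) hq
      have em : n + 1 - (j+1) = n - j := by omega
      have ej : j + 1 - 1 = j := by omega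
      rw [hp, em, ej]
      have key : q^(n-j) * q^((j+1)*(j+2)/2) = q^(n+1) * q^(j*(j+1)/2) := by
        rw [← pow_add, ← pow_add, tri]
        congr 1
        generalize j*(j+1)/2 = T
        omega
      have hD : (1:K) - q*q^j = 1 - q^(j+1) := by rw [pow_succ']
      rw [hD]
      rw [show q^(n+1) * ((-1:K)^j * gaussE q n j * q^(j*(j+1)/2) / (1 - q^(j+1)))
            = (q^(n+1) * ((-1:K)^j * gaussE q n j * q^(j*(j+1)/2))) / (1 - q^(j+1)) by
          ring]
      rw [← add_div]
      congr 1
      rw [show (j+1)+1 = j+2 from rfl]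
      linear_combination ((-1:K)^j * gaussE q n j) * key
    rw [Finset.sum_congr rfl hsplit, Finset.sum_add_distrib]
    rw [Finset.sum_range_succ (fun j => gaussE q n (j+1) * (-1:K)^j
          * q^((j+1)*((j+1)+1)/2) / (1 - q^(j+1))),
        show gaussE q n (n+1) = 0 by rw [gaussE, if_neg (by omega)]]
    simp only [zero_mul, zero_div, add_zero]
    rw [ih hq']
    have hxq : ∀ k, k ≤ n → q * q ^ k ≠ 1 := fun k hk => by
      have := hq (k+1) (by omega) (by omega)
      rwa [pow_succ'] at this
    rw [show (∑ j ∈ Finset.range (n+1),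
          q^(n+1) * ((-1:K)^j * gaussE q n j * q^(j*(j+1)/2) / (1 - q*q^j)))
        = q^(n+1) * ∑ j ∈ Finset.range (n+1),
            ((-1:K)^j * gaussE q n j * q^(j*(j+1)/2) / (1 - q*q^j)) from
      (Finset.mul_sum _ _ _).symm]
    rw [sumS q n q hxq hq', Finset.sum_range_succ (fun j => q^(j+1) / (1 - q^(j+1)))]
    have hQn : qPoch q q n ≠ 0 := Qne hq'
    have hd : (1:K) - q^(n+1) ≠ 0 := sub_ne_zero.2 (Ne.symm (hq (n+1) (by omega) le_rfl))
    rw [qPoch_succ q q n, show (1:K) - q*q^n = 1 - q^(n+1) by rw [pow_succ']]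
    rw [show qPoch q q n / (qPoch q q n * (1 - q^(n+1))) = 1 / (1 - q^(n+1)) by
      rw [div_mul_eq_div_div, div_self hQn]]
    ring
end VH

/-- Van Hamme's identity. -/
theorem van_hamme {K : Type*} [Field K] (q : K) (n : ℕ) (hn : 1 ≤ n)
    (hq : ∀ i : ℕ, 1 ≤ i → i ≤ n → q ^ i ≠ 1) :
    ∑ i ∈ Finset.Icc 1 n,
        gauss q n i * (-1 : K) ^ (i - 1) * q ^ (i * (i + 1) / 2) / (1 - q ^ i) =
      ∑ i ∈ Finset.Icc 1 n, q ^ i / (1 - q ^ i) := by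
  rw [← Finset.Ico_add_one_right_eq_Icc, Finset.sum_Ico_eq_sum_range, Finset.sum_Ico_eq_sum_range]
  have hm := VH.main_lemma q n hq
  have e : n + 1 - 1 = n := by omega
  rw [e]
  have eR : (∑ k ∈ Finset.range n, q^(1+k) / (1 - q^(1+k)))
      = ∑ k ∈ Finset.range n, q^(k+1) / (1 - q^(k+1)) :=
    Finset.sum_congr rfl fun k _ => by rw [add_comm 1 k]
  rw [eR, ← hm]
  refine Finset.sum_congr rfl fun j hj => ?_
  have hjn : j < n := Finset.mem_range.1 hj
  have h1 : 1 + j = j + 1 := by omega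
  rw [h1, show j + 1 - 1 = j by omega, show j + 1 + 1 = j + 1 + 1 from rfl]
  rw [VH.gaussE, if_pos (by omega)]
end

section
/- For every positive integer n and nonnegative integer m, the sum over i from 1 to n of [n choose i]_q (-1)^(i-1) q^(binom(i+1,2)) / (1 - q^(i+m)) equals the sum over i from 1 to n of (q^i/(1-q^i)) / [i+m choose i]_q. (Uchimura's identity.) -/
noncomputable def Tterm {K : Type*} [Field K] (q : K) (a j : ℕ) : K :=
  (-1 : K) ^ j * q ^ (j * (j + 1) / 2) / (1 - q ^ (j + a))

section Aux
variable {K : Type*} [Field K] (q : K)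

lemma qPoch_zero : qPoch q q 0 = 1 := by simp [qPoch]

lemma qPoch_succ (n : ℕ) : qPoch q q (n+1) = qPoch q q n * (1 - q^(n+1)) := by
  rw [qPoch, Finset.prod_range_succ, ← qPoch]; ring

lemma qPoch_ne_zero (n : ℕ) (hq : ∀ i, 1 ≤ i → i ≤ n → q^i ≠ 1) : qPoch q q n ≠ 0 := by
  rw [qPoch]
  apply Finset.prod_ne_zero_iff.mpr
  intro j hj
  simp only [Finset.mem_range] at hj
  have h1 := hq (j+1) (by omega) (by omega)
  intro h
  apply h1
  have : (1:K) = q * q^j := by linear_combination h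
  rw [pow_succ']
  exact this.symm

lemma gauss_self (n : ℕ) (h : qPoch q q n ≠ 0) : gauss q n n = 1 := by
  simp [gauss, qPoch_zero, div_self h]

lemma gauss_zero (n : ℕ) (h : qPoch q q n ≠ 0) : gauss q n 0 = 1 := by
  simp [gauss, qPoch_zero, div_self h]

lemma qPoch_add (m k : ℕ) :
    qPoch q q (m+k) = qPoch q q m * ∏ j ∈ Finset.range k, (1 - q^(m+1+j)) := by
  rw [qPoch, Finset.prod_range_add, ← qPoch]
  congr 1
  apply Finset.prod_congr rfl
  intro j _
  rw [show m+1+j = (m+j)+1 from by omega, pow_succ']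

lemma P_ne_zero (N a : ℕ) (ha : 1 ≤ a) (hq : ∀ i, 1 ≤ i → i ≤ N + a → q^i ≠ 1) :
    (∏ j ∈ Finset.range (N+1), (1 - q^(a+j))) ≠ 0 := by
  apply Finset.prod_ne_zero_iff.mpr
  intro j hj
  simp only [Finset.mem_range] at hj
  have h1 := hq (a+j) (by omega) (by omega)
  intro h
  exact h1 (by linear_combination -h)

lemma triangle (j : ℕ) : (j+1)*((j+1)+1)/2 = j*(j+1)/2 + (j+1) := by
  have h : (j+1)*((j+1)+1) = j*(j+1) + (j+1)*2 := by ring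
  rw [h, Nat.add_mul_div_right _ _ (by norm_num)]

lemma Tshift (N a j : ℕ) (hj : j ≤ N) :
    q^(N-j) * Tterm q a (j+1) = -q^(N+1) * Tterm q (a+1) j := by
  unfold Tterm
  have h1 : (j+1)+a = j+(a+1) := by omega
  have h2 : q^(N-j) * q^((j+1)*((j+1)+1)/2) = q^(N+1) * q^(j*(j+1)/2) := by
    rw [← pow_add, ← pow_add, triangle]
    congr 1
    omega
  rw [h1, div_eq_mul_inv, div_eq_mul_inv]
  linear_combination (-(-1:K)^j * (1 - q^(j+(a+1)))⁻¹) * h2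

lemma gauss_pascal (N j : ℕ) (hj : j + 1 ≤ N) (hq : ∀ i, 1 ≤ i → i ≤ N+1 → q^i ≠ 1) :
    gauss q (N+1) (j+1) = gauss q N (j+1) + q^(N-j) * gauss q N j := by
  obtain ⟨k, rfl⟩ : ∃ k, N = j+1+k := ⟨N-(j+1), by omega⟩
  have e1 : j+1+k+1 - (j+1) = k+1 := by omega
  have e2 : j+1+k - (j+1) = k := by omega
  have e3 : j+1+k - j = k+1 := by omega
  rw [gauss, gauss, gauss, e1, e2, e3]
  have hPj : qPoch q q j ≠ 0 := qPoch_ne_zero q j (fun i h1 h2 => hq i h1 (by omega))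
  have hPk : qPoch q q k ≠ 0 := qPoch_ne_zero q k (fun i h1 h2 => hq i h1 (by omega))
  have hPN : qPoch q q (j+1+k) ≠ 0 := qPoch_ne_zero q _ (fun i h1 h2 => hq i h1 (by omega))
  have hj1 : (1:K) - q^(j+1) ≠ 0 := sub_ne_zero.mpr (Ne.symm (hq (j+1) (by omega) (by omega)))
  have hk1 : (1:K) - q^(k+1) ≠ 0 := sub_ne_zero.mpr (Ne.symm (hq (k+1) (by omega) (by omega)))
  rw [show j+1+k+1 = (j+1+k)+1 from rfl, qPoch_succ q (j+1+k), qPoch_succ q j, qPoch_succ q k]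
  field_simp
  ring

lemma Ssucc (N a : ℕ) (hq : ∀ i, 1 ≤ i → i ≤ N+1 → q^i ≠ 1) :
    ∑ j ∈ Finset.range (N+1+1), gauss q (N+1) j * Tterm q a j
      = (∑ j ∈ Finset.range (N+1), gauss q N j * Tterm q a j)
        + (-q^(N+1)) * ∑ j ∈ Finset.range (N+1), gauss q N j * Tterm q (a+1) j := by
  have hPN : qPoch q q N ≠ 0 := qPoch_ne_zero q N (fun i h1 h2 => hq i h1 (by omega))
  have hPN1 : qPoch q q (N+1) ≠ 0 := qPoch_ne_zero q (N+1) hq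
  rw [Finset.sum_range_succ' (fun j => gauss q (N+1) j * Tterm q a j) (N+1),
      Finset.sum_range_succ (fun i => gauss q (N+1) (i+1) * Tterm q a (i+1)) N,
      Finset.sum_range_succ' (fun j => gauss q N j * Tterm q a j) N,
      Finset.sum_range_succ (fun j => gauss q N j * Tterm q (a+1) j) N]
  have e3 : ∑ i ∈ Finset.range N, gauss q (N+1) (i+1) * Tterm q a (i+1)
      = ∑ i ∈ Finset.range N,
          (gauss q N (i+1) * Tterm q a (i+1) + -q^(N+1) * (gauss q N i * Tterm q (a+1) i)) := by
    apply Finset.sum_congr rfl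
    intro i hi
    simp only [Finset.mem_range] at hi
    rw [gauss_pascal q N i (by omega) hq, add_mul]
    linear_combination (gauss q N i) * Tshift q N a i (by omega : i ≤ N)
  rw [e3, Finset.sum_add_distrib]
  have e4 : gauss q (N+1) (N+1) * Tterm q a (N+1) = -q^(N+1) * (gauss q N N * Tterm q (a+1) N) := by
    rw [gauss_self q (N+1) hPN1, gauss_self q N hPN]
    have h := Tshift q N a N le_rfl
    rw [Nat.sub_self, pow_zero, one_mul] at h
    linear_combination h
  have e5 : gauss q (N+1) 0 * Tterm q a 0 = gauss q N 0 * Tterm q a 0 := by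
    rw [gauss_zero q (N+1) hPN1, gauss_zero q N hPN]
  rw [e4, e5, mul_add, Finset.mul_sum]
  ring

lemma key (N : ℕ) : ∀ a : ℕ, 1 ≤ a → (∀ i, 1 ≤ i → i ≤ N + a → q^i ≠ 1) →
    ∑ j ∈ Finset.range (N+1), gauss q N j * Tterm q a j
      = qPoch q q N / ∏ j ∈ Finset.range (N+1), (1 - q^(a+j)) := by
  induction N with
  | zero =>
    intro a ha hq
    simp only [Finset.sum_range_one, Finset.prod_range_one, Nat.add_zero, Nat.zero_add]
    rw [gauss_zero q 0 (by simp [qPoch_zero]), qPoch_zero]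
    simp [Tterm]
  | succ N ih =>
    intro a ha hq
    have hq1 : ∀ i, 1 ≤ i → i ≤ N+1 → q^i ≠ 1 := fun i h1 h2 => hq i h1 (by omega)
    rw [Ssucc q N a hq1, ih a ha (fun i h1 h2 => hq i h1 (by omega)),
        ih (a+1) (by omega) (fun i h1 h2 => hq i h1 (by omega))]
    have hA : (∏ j ∈ Finset.range (N+1), (1 - q^(a+j))) ≠ 0 :=
      P_ne_zero q N a ha (fun i h1 h2 => hq i h1 (by omega))
    have hB : (∏ j ∈ Finset.range (N+1), (1 - q^(a+1+j))) ≠ 0 :=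
      P_ne_zero q N (a+1) (by omega) (fun i h1 h2 => hq i h1 (by omega))
    have hz : (1:K) - q^(a+(N+1)) ≠ 0 :=
      sub_ne_zero.mpr (Ne.symm (hq (a+(N+1)) (by omega) (by omega)))
    have hAB : (∏ j ∈ Finset.range (N+1), (1 - q^(a+j))) * (1 - q^(a+(N+1)))
        = (1 - q^a) * ∏ j ∈ Finset.range (N+1), (1 - q^(a+1+j)) := by
      have h1 : (∏ j ∈ Finset.range (N+1), (1 - q^(a+j))) * (1 - q^(a+(N+1)))
          = ∏ j ∈ Finset.range (N+1+1), (1 - q^(a+j)) :=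
        (Finset.prod_range_succ (fun j => 1 - q^(a+j)) (N+1)).symm
      have h2 : (∏ j ∈ Finset.range (N+1+1), (1 - q^(a+j)))
          = (∏ j ∈ Finset.range (N+1), (1 - q^(a+1+j))) * (1 - q^a) := by
        rw [Finset.prod_range_succ' (fun j => 1 - q^(a+j)) (N+1)]
        congr 1
        apply Finset.prod_congr rfl
        intro j _
        rw [show a+(j+1) = a+1+j from by omega]
      rw [h1, h2]; ring
    rw [Finset.prod_range_succ (fun j => 1 - q^(a+j)) (N+1), qPoch_succ]
    field_simp
    linear_combination (-(q^(N+1)) * qPoch q q N) * hAB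

lemma sum_Icc_one (n : ℕ) (f : ℕ → K) :
    ∑ i ∈ Finset.Icc 1 n, f i = ∑ j ∈ Finset.range n, f (j+1) := by
  induction n with
  | zero => simp
  | succ n ih =>
    rw [Finset.sum_Icc_succ_top (by omega : 1 ≤ n+1), Finset.sum_range_succ, ih]

lemma Lsum (n m : ℕ) (hn : qPoch q q n ≠ 0) :
    ∑ i ∈ Finset.Icc 1 n, gauss q n i * Tterm q m i
      = (∑ j ∈ Finset.range (n+1), gauss q n j * Tterm q m j) - Tterm q m 0 := by
  rw [Finset.sum_range_succ' (fun j => gauss q n j * Tterm q m j) n, gauss_zero q n hn,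
    one_mul, sum_Icc_one]
  ring

lemma step_val (n m : ℕ) (hq : ∀ i, 1 ≤ i → i ≤ n + 1 + m → q^i ≠ 1) :
    q^(n+1) * (qPoch q q n / ∏ j ∈ Finset.range (n+1), (1 - q^(m+1+j)))
      = (q^(n+1) / (1 - q^(n+1))) / gauss q (n+1+m) (n+1) := by
  have hm : qPoch q q m ≠ 0 := qPoch_ne_zero q m (fun i h1 h2 => hq i h1 (by omega))
  have hn : qPoch q q n ≠ 0 := qPoch_ne_zero q n (fun i h1 h2 => hq i h1 (by omega))
  have hP : (∏ j ∈ Finset.range (n+1), (1 - q^(m+1+j))) ≠ 0 := by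
    have := P_ne_zero q n (m+1) (by omega) (fun i h1 h2 => hq i h1 (by omega))
    convert this using 2
  have hx : (1:K) - q^(n+1) ≠ 0 :=
    sub_ne_zero.mpr (Ne.symm (hq (n+1) (by omega) (by omega)))
  rw [gauss, show n+1+m-(n+1) = m from by omega,
      show n+1+m = m+(n+1) from by omega, qPoch_add q m (n+1), qPoch_succ q n]
  field_simp

lemma main_aux (m : ℕ) : ∀ n, 1 ≤ n → (∀ i, 1 ≤ i → i ≤ n + m → q^i ≠ 1) →
    ∑ i ∈ Finset.Icc 1 n, gauss q n i * Tterm q m i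
      = -∑ i ∈ Finset.Icc 1 n, (q ^ i / (1 - q ^ i)) / gauss q (i + m) i := by
  intro n hn
  induction n, hn using Nat.le_induction with
  | base =>
    intro hq
    simp only [Finset.Icc_self, Finset.sum_singleton]
    have h1 : (1:K) - q ≠ 0 := by
      have := hq 1 le_rfl (by omega)
      rw [pow_one] at this
      exact sub_ne_zero.mpr (Ne.symm this)
    have hm : qPoch q q m ≠ 0 := qPoch_ne_zero q m (fun i h1 h2 => hq i h1 (by omega))
    have hm1 : (1:K) - q^(m+1) ≠ 0 :=
      sub_ne_zero.mpr (Ne.symm (hq (m+1) (by omega) (by omega)))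
    have hg1 : gauss q 1 1 = 1 := gauss_self q 1 (by
      rw [qPoch_succ, qPoch_zero, one_mul, pow_one]
      exact h1)
    rw [hg1, one_mul, Tterm, gauss, show 1+m-1 = m from by omega,
        show 1+m = m+1 from by omega, qPoch_succ q m, qPoch_succ q 0, qPoch_zero]
    simp only [pow_one, one_mul]
    rw [show (1:ℕ)*(1+1)/2 = 1 from rfl, pow_one]
    field_simp
  | succ n hn ih =>
    intro hq
    have hq' : ∀ i, 1 ≤ i → i ≤ n + m → q^i ≠ 1 := fun i h1 h2 => hq i h1 (by omega)
    have hq1 : ∀ i, 1 ≤ i → i ≤ n + 1 → q^i ≠ 1 := fun i h1 h2 => hq i h1 (by omega)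
    have hPn : qPoch q q n ≠ 0 := qPoch_ne_zero q n (fun i h1 h2 => hq i h1 (by omega))
    have hPn1 : qPoch q q (n+1) ≠ 0 := qPoch_ne_zero q (n+1) hq1
    have hU : ∑ i ∈ Finset.Icc 1 (n+1), gauss q (n+1) i * Tterm q m i
        = (∑ i ∈ Finset.Icc 1 n, gauss q n i * Tterm q m i)
          + (-q^(n+1)) * (qPoch q q n / ∏ j ∈ Finset.range (n+1), (1 - q^(m+1+j))) := by
      rw [Lsum q (n+1) m hPn1, Lsum q n m hPn, Ssucc q n m hq1,
          key q n (m+1) (by omega) (fun i h1 h2 => hq i h1 (by omega))]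
      ring
    rw [hU, ih hq', Finset.sum_Icc_succ_top (by omega : 1 ≤ n+1)]
    have hstep := step_val q n m hq
    rw [neg_add, ← hstep]
    ring


end Aux

/-- Uchimura's identity. -/
theorem uchimura {K : Type*} [Field K] (q : K) (n m : ℕ) (hn : 1 ≤ n)
    (hq : ∀ i : ℕ, 1 ≤ i → i ≤ n + m → q ^ i ≠ 1) :
    ∑ i ∈ Finset.Icc 1 n,
        gauss q n i * (-1 : K) ^ (i - 1) * q ^ (i * (i + 1) / 2) / (1 - q ^ (i + m)) =
      ∑ i ∈ Finset.Icc 1 n, (q ^ i / (1 - q ^ i)) / gauss q (i + m) i := by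
  have h := main_aux q m n hn hq
  have hL : ∑ i ∈ Finset.Icc 1 n,
      gauss q n i * (-1 : K) ^ (i - 1) * q ^ (i * (i + 1) / 2) / (1 - q ^ (i + m))
      = -∑ i ∈ Finset.Icc 1 n, gauss q n i * Tterm q m i := by
    rw [← Finset.sum_neg_distrib]
    apply Finset.sum_congr rfl
    intro i hi
    rw [Finset.mem_Icc] at hi
    obtain ⟨j, rfl⟩ : ∃ j, i = j + 1 := ⟨i - 1, by omega⟩
    simp only [Nat.add_sub_cancel, Tterm]
    ring
  rw [hL, h, neg_neg]
end

section
/- For all positive integers n and m, the sum over i from 1 to n of [n choose i]_q (-1)^(i-1) q^(binom(i,2)+mi) / (1-q^i)^m equals the sum over all weakly increasing m-tuples 1 ≤ i_1 ≤ i_2 ≤ ... ≤ i_m ≤ n of the product q^(i_1)/(1-q^(i_1)) · ... · q^(i_m)/(1-q^(i_m)). (Dilcher's identity.) -/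
namespace DilcherAux

variable {K : Type*} [Field K]

lemma qq_succ (q : K) (n : ℕ) :
    qPoch q q (n+1) = qPoch q q n * (1 - q ^ (n+1)) := by
  rw [qPoch, Finset.prod_range_succ, ← qPoch, ← pow_succ']

lemma qPoch_ne_zero {q : K} {n N : ℕ} (hn : n ≤ N)
    (hq : ∀ i : ℕ, 1 ≤ i → i ≤ N → q ^ i ≠ 1) : qPoch q q n ≠ 0 := by
  unfold qPoch
  refine Finset.prod_ne_zero_iff.2 fun j hj => ?_
  rw [Finset.mem_range] at hj
  rw [← pow_succ']
  exact sub_ne_zero_of_ne (Ne.symm (hq (j+1) (by omega) (by omega)))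

lemma qPoch_zero (z q : K) : qPoch z q 0 = 1 := by simp [qPoch]

lemma gauss_zero {q : K} {n : ℕ} (h : qPoch q q n ≠ 0) : gauss q n 0 = 1 := by
  rw [gauss, Nat.sub_zero, qPoch_zero, one_mul, div_self h]

lemma gauss_self {q : K} {n : ℕ} (h : qPoch q q n ≠ 0) : gauss q n n = 1 := by
  rw [gauss, Nat.sub_self, qPoch_zero, mul_one, div_self h]

lemma tri (i : ℕ) : (i+1)*i/2 = i*(i-1)/2 + i := by
  have e1 : (i+1)*i/2 = (i+1).choose 2 := by
    rw [Nat.choose_two_right]; simp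
  have e2 : i*(i-1)/2 = i.choose 2 := (Nat.choose_two_right i).symm
  rw [e1, e2, Nat.choose_succ_succ, Nat.choose_one_right]
  exact Nat.add_comm i (i.choose 2)

lemma gauss_succ_left (q : K) {n i : ℕ} (h : i ≤ n) :
    gauss q (n+1) i = gauss q n i * ((1 - q ^ (n+1)) / (1 - q ^ (n+1-i))) := by
  have h1 : n + 1 - i = (n - i) + 1 := by omega
  unfold gauss
  rw [h1, qq_succ, qq_succ, div_mul_div_comm]
  ring

lemma gauss_pascal (q : K) {n i : ℕ} (h1 : 1 ≤ i) (h2 : i ≤ n)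
    (hq : ∀ j : ℕ, 1 ≤ j → j ≤ n+1 → q ^ j ≠ 1) :
    gauss q (n+1) i = gauss q n i + q ^ (n+1-i) * gauss q n (i-1) := by
  have hsub1 : n + 1 - i = (n - i) + 1 := by omega
  have hsub2 : n - (i - 1) = (n - i) + 1 := by omega
  have hfi1 : qPoch q q (i-1) ≠ 0 := qPoch_ne_zero (by omega) hq
  have hfni : qPoch q q (n-i) ≠ 0 := qPoch_ne_zero (by omega) hq
  have hx : (1 - q ^ i) ≠ 0 := sub_ne_zero_of_ne (Ne.symm (hq i h1 (by omega)))
  have hy : (1 - q ^ ((n-i)+1)) ≠ 0 :=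
    sub_ne_zero_of_ne (Ne.symm (hq _ (by omega) (by omega)))
  unfold gauss
  rw [hsub1, hsub2, qq_succ q n, qq_succ q (n-i),
    show qPoch q q i = qPoch q q (i-1) * (1 - q^i) from by
      conv_lhs => rw [show i = (i-1)+1 from by omega]
      rw [qq_succ, show i - 1 + 1 = i from by omega],
    show q^(n+1) = q^i * q^(n-i+1) from by rw [← pow_add]; congr 1; omega]
  field_simp
  ring

lemma keyL (q : K) {i : ℕ} (hi : 1 ≤ i) {n : ℕ} (hin : i ≤ n)
    (hq : ∀ j : ℕ, 1 ≤ j → j ≤ n → q ^ j ≠ 1) :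
    ∑ j ∈ Finset.Icc i n, gauss q j i * (q ^ j / (1 - q ^ j))
      = gauss q n i * (q ^ i / (1 - q ^ i)) := by
  induction n, hin using Nat.le_induction with
  | base => rw [Finset.Icc_self, Finset.sum_singleton]
  | succ n hin ih =>
    have hqn : ∀ j : ℕ, 1 ≤ j → j ≤ n → q ^ j ≠ 1 := fun j a b => hq j a (by omega)
    rw [Finset.sum_Icc_succ_top (by omega : i ≤ n+1), ih hqn, gauss_succ_left q hin]
    have hx : (1 - q ^ i) ≠ 0 := sub_ne_zero_of_ne (Ne.symm (hq i hi (by omega)))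
    have hw : (1 - q ^ (n+1-i)) ≠ 0 :=
      sub_ne_zero_of_ne (Ne.symm (hq _ (by omega) (by omega)))
    have hz : (1 - q ^ i * q ^ (n+1-i)) ≠ 0 := by
      rw [← pow_add, show i + (n+1-i) = n+1 from by omega]
      exact sub_ne_zero_of_ne (Ne.symm (hq _ (by omega) (by omega)))
    rw [show q^(n+1) = q^i * q^(n+1-i) from by rw [← pow_add]; congr 1; omega]
    field_simp
    ring

lemma qbinom (q : K) : ∀ n : ℕ, (∀ j : ℕ, 1 ≤ j → j ≤ n → q ^ j ≠ 1) →
    ∑ i ∈ Finset.range (n+1), gauss q n i * (-1:K) ^ i * q ^ (i*(i-1)/2)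
      = ∏ j ∈ Finset.range n, (1 - q ^ j) := by
  intro n
  induction n with
  | zero => intro _; simp [gauss, qPoch]
  | succ n ih =>
    intro hq
    have hqn : ∀ j : ℕ, 1 ≤ j → j ≤ n → q ^ j ≠ 1 := fun j a b => hq j a (by omega)
    have hP := ih hqn
    have hfn : qPoch q q n ≠ 0 := qPoch_ne_zero le_rfl hqn
    have hfn1 : qPoch q q (n+1) ≠ 0 := qPoch_ne_zero le_rfl hq
    have h00 : gauss q n 0 = 1 := gauss_zero hfn
    have h001 : gauss q (n+1) 0 = 1 := gauss_zero hfn1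
    have hnn : gauss q n n = 1 := gauss_self hfn
    have hn1 : gauss q (n+1) (n+1) = 1 := gauss_self hfn1
    rw [Finset.prod_range_succ, ← hP]
    rw [Finset.sum_range_succ' (fun i => gauss q (n+1) i * (-1:K)^i * q^(i*(i-1)/2)) (n+1)]
    rw [Finset.sum_range_succ (fun i => gauss q (n+1) (i+1) * (-1:K)^(i+1) * q^((i+1)*((i+1)-1)/2)) n]
    have key : ∀ i ∈ Finset.range n,
        gauss q (n+1) (i+1) * (-1:K)^(i+1) * q^((i+1)*((i+1)-1)/2)
          = gauss q n (i+1) * (-1:K)^(i+1) * q^((i+1)*((i+1)-1)/2)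
            - q^n * (gauss q n i * (-1:K)^i * q^(i*(i-1)/2)) := by
      intro i hi
      rw [Finset.mem_range] at hi
      rw [gauss_pascal q (by omega) (by omega) hq,
        show n + 1 - (i+1) = n - i from by omega]
      simp only [Nat.add_sub_cancel]
      have h3 : q^(n-i) * q^((i+1)*i/2) = q^n * q^(i*(i-1)/2) := by
        rw [← pow_add, ← pow_add]
        congr 1
        have := tri i
        omega
      linear_combination (-((-1:K)^i) * gauss q n i) * h3
    rw [Finset.sum_congr rfl key, Finset.sum_sub_distrib, ← Finset.mul_sum]
    have e1 : ∑ i ∈ Finset.range n, gauss q n (i+1) * (-1:K)^(i+1) * q^((i+1)*((i+1)-1)/2)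
        = (∑ i ∈ Finset.range (n+1), gauss q n i * (-1:K)^i * q^(i*(i-1)/2)) - 1 := by
      rw [Finset.sum_range_succ' (fun i => gauss q n i * (-1:K)^i * q^(i*(i-1)/2)) n]
      simp [h00]
    have e2 : ∑ i ∈ Finset.range n, gauss q n i * (-1:K)^i * q^(i*(i-1)/2)
        = (∑ i ∈ Finset.range (n+1), gauss q n i * (-1:K)^i * q^(i*(i-1)/2))
          - (-1:K)^n * q^(n*(n-1)/2) := by
      rw [Finset.sum_range_succ, hnn]; ring
    rw [e1, e2, hn1, h001]
    have h4 : q^((n+1)*((n+1)-1)/2) = q^(n*(n-1)/2) * q^n := by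
      rw [← pow_add]
      congr 1
      have := tri n
      simp only [Nat.add_sub_cancel] at *
      omega
    rw [h4]
    ring

lemma base0 (q : K) {n : ℕ} (hn : 1 ≤ n) (hq : ∀ i : ℕ, 1 ≤ i → i ≤ n → q ^ i ≠ 1) :
    ∑ i ∈ Finset.Icc 1 n, gauss q n i * (-1:K) ^ (i-1) * q ^ (i*(i-1)/2) = 1 := by
  have hb := qbinom q n hq
  have hprod : ∏ j ∈ Finset.range n, (1 - q ^ j) = 0 :=
    Finset.prod_eq_zero (Finset.mem_range.2 hn) (by simp)
  rw [hprod] at hb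
  rw [Finset.sum_range_succ' (fun i => gauss q n i * (-1:K)^i * q^(i*(i-1)/2)) n] at hb
  have h00 : gauss q n 0 = 1 := gauss_zero (qPoch_ne_zero le_rfl hq)
  simp only [h00, pow_zero, mul_one, one_mul] at hb
  -- hb : (∑ i ∈ range n, gauss q n (i+1) * (-1)^(i+1) * q^(c(i+1))) + 1 = 0
  have hshift : ∑ i ∈ Finset.Icc 1 n, gauss q n i * (-1:K) ^ (i-1) * q ^ (i*(i-1)/2)
      = ∑ i ∈ Finset.range n, gauss q n (i+1) * (-1:K) ^ i * q ^ ((i+1)*((i+1)-1)/2) := by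
    rw [← Finset.Ico_add_one_right_eq_Icc, Finset.sum_Ico_eq_sum_range]
    simp [add_comm 1]
  rw [hshift]
  have : ∀ i ∈ Finset.range n,
      gauss q n (i+1) * (-1:K) ^ i * q ^ ((i+1)*((i+1)-1)/2)
        = -(gauss q n (i+1) * (-1:K) ^ (i+1) * q ^ ((i+1)*((i+1)-1)/2)) := by
    intro i _
    rw [pow_succ]
    ring
  rw [Finset.sum_congr rfl this, Finset.sum_neg_distrib]
  linear_combination -hb

def Rq (q : K) : ℕ → ℕ → K
  | _, 0 => 1
  | n, (m+1) => ∑ j ∈ Finset.Icc 1 n, q ^ j / (1 - q ^ j) * Rq q j m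

lemma lhs_eq (q : K) : ∀ (m n : ℕ), 1 ≤ n → (∀ i : ℕ, 1 ≤ i → i ≤ n → q ^ i ≠ 1) →
    ∑ i ∈ Finset.Icc 1 n,
        gauss q n i * (-1 : K) ^ (i - 1) * q ^ (i * (i - 1) / 2 + m * i) / (1 - q ^ i) ^ m
      = Rq q n m := by
  intro m
  induction m with
  | zero =>
    intro n hn hq
    simp only [Nat.zero_mul, Nat.add_zero, pow_zero, div_one, Rq]
    exact base0 q hn hq
  | succ m ih =>
    intro n hn hq
    rw [show Rq q n (m+1) = ∑ j ∈ Finset.Icc 1 n, q ^ j / (1 - q ^ j) * Rq q j m from rfl]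
    have h1 : ∀ j ∈ Finset.Icc 1 n, q ^ j / (1 - q ^ j) * Rq q j m
        = ∑ i ∈ Finset.Icc 1 j, q ^ j / (1 - q ^ j) *
            (gauss q j i * (-1 : K) ^ (i - 1) * q ^ (i * (i - 1) / 2 + m * i) / (1 - q ^ i) ^ m) := by
      intro j hj
      rw [Finset.mem_Icc] at hj
      rw [← ih j hj.1 (fun a b c => hq a b (by omega)), Finset.mul_sum]
    rw [Finset.sum_congr rfl h1]
    rw [Finset.sum_comm' (t' := Finset.Icc 1 n) (s' := fun i => Finset.Icc i n)
      (h := by intro x y; simp only [Finset.mem_Icc]; omega)]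
    refine Finset.sum_congr rfl fun i hi => ?_
    rw [Finset.mem_Icc] at hi
    have e : ∀ j ∈ Finset.Icc i n, q ^ j / (1 - q ^ j) *
          (gauss q j i * (-1 : K) ^ (i - 1) * q ^ (i * (i - 1) / 2 + m * i) / (1 - q ^ i) ^ m)
        = (gauss q j i * (q ^ j / (1 - q ^ j))) *
            ((-1 : K) ^ (i - 1) * q ^ (i * (i - 1) / 2 + m * i) / (1 - q ^ i) ^ m) :=
      fun j _ => by ring
    rw [Finset.sum_congr rfl e, ← Finset.sum_mul, keyL q hi.1 hi.2 hq]
    have hx : (1 - q ^ i) ≠ 0 := sub_ne_zero_of_ne (Ne.symm (hq i hi.1 hi.2))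
    rw [show q ^ (i * (i - 1) / 2 + (m+1) * i) = q ^ (i * (i - 1) / 2 + m * i) * q ^ i from by
      rw [← pow_add]; congr 1; ring]
    rw [pow_succ]
    field_simp

lemma fiber_eq (g : ℕ → K) (m n : ℕ) (j : Fin n) :
    ∑ t ∈ Finset.univ.filter (fun t : Fin (m+1) → Fin n =>
        (∀ a b : Fin (m+1), a ≤ b → t a ≤ t b) ∧ t (Fin.last m) = j),
      ∏ k : Fin (m+1), g (t k)
    = g (j : ℕ) * ∑ s ∈ Finset.univ.filter (fun s : Fin m → Fin ((j:ℕ)+1) =>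
        ∀ a b : Fin m, a ≤ b → s a ≤ s b),
      ∏ k : Fin m, g (s k) := by
  rw [Finset.mul_sum]
  refine Finset.sum_nbij'
    (fun t => fun k : Fin m =>
      (⟨min ((t k.castSucc : ℕ)) (j : ℕ), by omega⟩ : Fin ((j:ℕ)+1)))
    (fun s => Fin.snoc (fun k => (⟨((s k : ℕ)), by
        have h1 := (s k).isLt; have h2 := j.isLt; omega⟩ : Fin n)) j)
    ?_ ?_ ?_ ?_ ?_
  · intro t ht
    rw [Finset.mem_filter] at ht ⊢
    obtain ⟨-, hmono, hlast⟩ := ht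
    refine ⟨Finset.mem_univ _, fun a b hab => ?_⟩
    have := hmono a.castSucc b.castSucc (Fin.castSucc_le_castSucc_iff.mpr hab)
    rw [Fin.le_def] at this ⊢
    simp only
    omega
  · intro s hs
    rw [Finset.mem_filter] at hs ⊢
    obtain ⟨-, hmono⟩ := hs
    refine ⟨Finset.mem_univ _, fun a b hab => ?_, by simp⟩
    induction b using Fin.lastCases with
    | last =>
      simp only [Fin.snoc_last]
      induction a using Fin.lastCases with
      | last => simp
      | cast a =>
        simp only [Fin.snoc_castSucc]
        rw [Fin.le_def]
        have := (s a).isLt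
        simp only
        omega
    | cast b =>
      induction a using Fin.lastCases with
      | last => exact absurd hab (not_le.mpr (Fin.castSucc_lt_last b))
      | cast a =>
        simp only [Fin.snoc_castSucc]
        have := hmono a b (Fin.castSucc_le_castSucc_iff.mp hab)
        rw [Fin.le_def] at this ⊢
        simpa using this
  · intro t ht
    rw [Finset.mem_filter] at ht
    obtain ⟨-, hmono, hlast⟩ := ht
    funext k
    induction k using Fin.lastCases with
    | last => simp only [Fin.snoc_last]; exact hlast.symm
    | cast k =>
      simp only [Fin.snoc_castSucc]
      have h2 := hmono k.castSucc (Fin.last m) (Fin.le_last _)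
      rw [hlast, Fin.le_def] at h2
      exact Fin.ext (by simp; omega)
  · intro s hs
    funext k
    simp only [Fin.snoc_castSucc]
    have := (s k).isLt
    exact Fin.ext (by simp; omega)
  · intro t ht
    rw [Finset.mem_filter] at ht
    obtain ⟨-, hmono, hlast⟩ := ht
    rw [Fin.prod_univ_castSucc, hlast, mul_comm]
    congr 1
    refine Finset.prod_congr rfl fun k _ => ?_
    congr 1
    have h2 := hmono k.castSucc (Fin.last m) (Fin.le_last _)
    rw [hlast, Fin.le_def] at h2
    simp only
    omega

lemma comb (g : ℕ → K) (m n : ℕ) :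
    ∑ t ∈ Finset.univ.filter (fun t : Fin (m+1) → Fin n => ∀ a b : Fin (m+1), a ≤ b → t a ≤ t b),
      ∏ k : Fin (m+1), g (t k)
    = ∑ j ∈ Finset.range n, g j *
        ∑ s ∈ Finset.univ.filter (fun s : Fin m → Fin (j+1) => ∀ a b : Fin m, a ≤ b → s a ≤ s b),
          ∏ k : Fin m, g (s k) := by
  rw [← Finset.sum_fiberwise
    (Finset.univ.filter (fun t : Fin (m+1) → Fin n => ∀ a b : Fin (m+1), a ≤ b → t a ≤ t b))
    (fun t => t (Fin.last m)) (fun t => ∏ k : Fin (m+1), g (t k))]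
  rw [← Fin.sum_univ_eq_sum_range (fun j => g j *
      ∑ s ∈ Finset.univ.filter (fun s : Fin m → Fin (j+1) => ∀ a b : Fin m, a ≤ b → s a ≤ s b),
        ∏ k : Fin m, g (s k)) n]
  refine Finset.sum_congr rfl fun j _ => ?_
  rw [Finset.filter_filter]
  exact fiber_eq g m n j

lemma rhs_eq (q : K) : ∀ (m n : ℕ),
    ∑ t ∈ Finset.univ.filter (fun t : Fin m → Fin n => ∀ a b : Fin m, a ≤ b → t a ≤ t b),
        ∏ k : Fin m, q ^ ((t k : ℕ) + 1) / (1 - q ^ ((t k : ℕ) + 1)) = Rq q n m := by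
  intro m
  induction m with
  | zero =>
    intro n
    rw [show Rq q n 0 = 1 from rfl,
      Finset.filter_true_of_mem (fun t _ => fun a b _ => a.elim0)]
    simp
  | succ m ih =>
    intro n
    have hc := comb (fun i => q ^ (i+1) / (1 - q ^ (i+1))) m n
    rw [hc, show Rq q n (m+1) = ∑ j ∈ Finset.Icc 1 n, q ^ j / (1 - q ^ j) * Rq q j m from rfl,
      ← Finset.Ico_add_one_right_eq_Icc, Finset.sum_Ico_eq_sum_range]
    rw [show n + 1 - 1 = n from rfl]
    refine Finset.sum_congr rfl fun j _ => ?_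
    rw [add_comm 1 j, ← ih (j+1)]

end DilcherAux

/-- Dilcher's identity.  The right-hand side is a sum over weakly increasing
`m`-tuples `1 ≤ i₁ ≤ ⋯ ≤ i_m ≤ n`, encoded as monotone maps `t : Fin m → Fin n`
(where `t k` encodes `i_{k+1} - 1`). -/
theorem dilcher {K : Type*} [Field K] (q : K) (n m : ℕ) (hn : 1 ≤ n) (hm : 1 ≤ m)
    (hq : ∀ i : ℕ, 1 ≤ i → i ≤ n → q ^ i ≠ 1) :
    ∑ i ∈ Finset.Icc 1 n,
        gauss q n i * (-1 : K) ^ (i - 1) * q ^ (i * (i - 1) / 2 + m * i) / (1 - q ^ i) ^ m =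
      ∑ t ∈ Finset.univ.filter (fun t : Fin m → Fin n => ∀ a b : Fin m, a ≤ b → t a ≤ t b),
        ∏ k : Fin m, q ^ ((t k : ℕ) + 1) / (1 - q ^ ((t k : ℕ) + 1)) :=
  (DilcherAux.lhs_eq q m n hn hq).trans (DilcherAux.rhs_eq q m n).symm
end

section
/- For distinct points x_1,...,x_n and y not among them, the sum over i from 1 to n of (1/(y-x_i)) · prod_{j≠i}(1-x_j) / prod_{j≠i}(x_i-x_j) equals sum_{i=0}^{n-1} prod_{j=1}^{i}(1-x_j) / prod_{j=1}^{i+1}(y-x_j). -/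
/-!
Both sides are values at `1` of the interpolating polynomial of `f(t) = 1/(y - t)` at the
nodes `x 0, …, x (n-1)`: the left side in Lagrange form, the right side in Newton form, whose
divided differences are `f[x 0, …, x i] = 1 / ∏_{j ≤ i} (y - x j)`. That this Newton form
interpolates `f` follows from the telescoping identity
`(y - z) · ∑_{i<n} ∏_{j<i} (z - x j) / ∏_{j≤i} (y - x j) = 1 - ∏_{j<n} (z - x j) / (y - x j)`,
whose right side is `1` at every node `z = x k`.
-/

open Polynomial Finset

section

variable {K : Type*} [Field K]

theorem Lagrange.eval_interpolate_eq_sum {ι : Type*} [DecidableEq ι] (s : Finset ι)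
    (v r : ι → K) (z : K) :
    (Lagrange.interpolate s v r).eval z =
      ∑ i ∈ s, r i * (∏ j ∈ s.erase i, (z - v j)) / ∏ j ∈ s.erase i, (v i - v j) := by
  simp only [Lagrange.interpolate_apply, eval_finsetSum, eval_mul, eval_C, Lagrange.basis,
    Lagrange.basisDivisor, eval_prod, eval_sub, eval_X, prod_mul_distrib, prod_inv_distrib]
  exact sum_congr rfl fun i _ => by ring

noncomputable def newtonForm (x c : ℕ → K) (n : ℕ) : K[X] :=
  ∑ i ∈ range n, c i • Lagrange.nodal (range i) x

theorem eval_newtonForm (x c : ℕ → K) (n : ℕ) (z : K) :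
    (newtonForm x c n).eval z = ∑ i ∈ range n, c i * ∏ j ∈ range i, (z - x j) := by
  simp only [newtonForm, eval_finsetSum, eval_smul, smul_eq_mul, Lagrange.eval_nodal]

theorem degree_newtonForm_lt (x c : ℕ → K) (n : ℕ) : (newtonForm x c n).degree < n := by
  rw [← mem_degreeLT]
  refine sum_mem fun i hi => mem_degreeLT.2 ((degree_smul_le _ _).trans_lt ?_)
  rw [Lagrange.degree_nodal, card_range]
  exact_mod_cast mem_range.1 hi

theorem sub_mul_sum_prod_div_prod (x : ℕ → K) {y : K} (z : K) {n : ℕ}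
    (hy : ∀ j < n, y ≠ x j) :
    (y - z) * ∑ i ∈ range n, (∏ j ∈ range i, (z - x j)) / ∏ j ∈ range (i + 1), (y - x j) =
      1 - ∏ j ∈ range n, (z - x j) / (y - x j) := by
  induction n with
  | zero => simp
  | succ n ih =>
    have hyn : y - x n ≠ 0 := sub_ne_zero.2 (hy n n.lt_succ_self)
    rw [sum_range_succ, mul_add, ih fun j hj => hy j (hj.trans n.lt_succ_self),
      prod_range_succ, prod_range_succ, prod_div_distrib]
    field_simp
    ring

theorem eval_newtonForm_at_node (x : ℕ → K) {y : K} {n k : ℕ} (hy : ∀ j < n, y ≠ x j)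
    (hk : k < n) :
    (newtonForm x (fun i => (∏ j ∈ range (i + 1), (y - x j))⁻¹) n).eval (x k) =
      1 / (y - x k) := by
  have hnode : ∏ j ∈ range n, (x k - x j) / (y - x j) = 0 :=
    prod_eq_zero (mem_range.2 hk) (by rw [sub_self, zero_div])
  have h := sub_mul_sum_prod_div_prod x (x k) hy
  rw [hnode, sub_zero] at h
  rw [eval_newtonForm, ← eq_one_div_of_mul_eq_one_right h]
  simp only [inv_mul_eq_div]

end

/-- The identity obtained by comparing Newton and Lagrange interpolation of
`f(x) = 1/(y - x)` at the point `x = 1`. -/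
theorem newton_lagrange_at_one {K : Type*} [Field K] (n : ℕ) (x : ℕ → K) (y : K)
    (hx : ∀ i j, i < n → j < n → i ≠ j → x i ≠ x j)
    (hy : ∀ j, j < n → y ≠ x j) :
    ∑ i ∈ Finset.range n,
        (1 / (y - x i)) * (∏ j ∈ (Finset.range n).erase i, (1 - x j)) /
          (∏ j ∈ (Finset.range n).erase i, (x i - x j)) =
      ∑ i ∈ Finset.range n,
        (∏ j ∈ Finset.range i, (1 - x j)) / (∏ j ∈ Finset.range (i + 1), (y - x j)) := by
  have hinj : Set.InjOn x (range n) := fun i hi j hj hij =>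
    of_not_not fun hne => hx i j (mem_range.1 hi) (mem_range.1 hj) hne hij
  have hnewton : newtonForm x (fun i => (∏ j ∈ range (i + 1), (y - x j))⁻¹) n =
      Lagrange.interpolate (range n) x (fun i => 1 / (y - x i)) :=
    Lagrange.eq_interpolate_of_eval_eq _ hinj (by simpa using degree_newtonForm_lt _ _ n)
      fun k hk => eval_newtonForm_at_node x hy (mem_range.1 hk)
  have h := congrArg (eval 1) hnewton
  rw [eval_newtonForm, Lagrange.eval_interpolate_eq_sum] at h
  simp only [inv_mul_eq_div] at h
  exact h.symm
end

section
/- For distinct points x_1,...,x_n in a field and any integer m ≥ 0, the sum over i from 1 to n of x_i^m / prod_{j≠i}(x_i - x_j) equals the complete homogeneous symmetric polynomial h_{m-n+1}(x_1,...,x_n), where h_k = 0 for k < 0 and h_0 = 1. -/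
open Finset Polynomial
lemma dd_zero {K : Type*} [Field K] (n : ℕ) (x : Fin (n+2) → K)
    (hx : ∀ i j, i ≠ j → x i ≠ x j) :
    ∑ i : Fin (n+2), 1 / ∏ j ∈ Finset.univ.erase i, (x i - x j) = 0 := by
  have hinj : Set.InjOn x (univ : Finset (Fin (n+2))) := fun i _ j _ h => by
    by_contra hne; exact hx i j hne h
  have hb := Lagrange.sum_basis hinj univ_nonempty
  have h2 := congrArg (Polynomial.coeff · (n+1)) hb
  simp only [Polynomial.finset_sum_coeff] at h2
  have hc : ∀ i : Fin (n+2),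
      (Lagrange.basis univ x i).coeff (n+1) = 1 / ∏ j ∈ univ.erase i, (x i - x j) := by
    intro i
    have hbi : Lagrange.basis univ x i
        = C (Lagrange.nodalWeight univ x i) * Lagrange.nodal (univ.erase i) x := by
      rw [Lagrange.basis_eq_prod_sub_inv_mul_nodal_div (mem_univ i),
        Lagrange.nodal_erase_eq_nodal_div (mem_univ i)]
    have hdeg : (Lagrange.nodal (univ.erase i) x).natDegree = n + 1 := by
      rw [Lagrange.natDegree_nodal, card_erase_of_mem (mem_univ i), card_univ, Fintype.card_fin]
      rfl
    rw [hbi, coeff_C_mul, ← hdeg, (Lagrange.nodal_monic).coeff_natDegree,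
      mul_one, Lagrange.nodalWeight, one_div, ← prod_inv_distrib]
  simp only [hc] at h2
  rw [h2]
  rw [Polynomial.coeff_one]
  simp

lemma notin_map_castSucc (n : ℕ) (s : Finset (Fin (n+1))) :
    Fin.last (n+1) ∉ s.map Fin.castSuccEmb := by
  simp only [mem_map, Fin.castSuccEmb, not_exists]
  rintro j ⟨-, hj⟩
  exact (Fin.castSucc_lt_last j).ne hj

lemma erase_castSucc (n : ℕ) (i : Fin (n+1)) :
    (Finset.univ.erase i.castSucc : Finset (Fin (n+2)))
      = insert (Fin.last (n+1)) ((Finset.univ.erase i).map Fin.castSuccEmb) := by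
  ext j
  simp only [mem_erase, mem_univ, and_true, mem_insert, mem_map, Fin.castSuccEmb]
  induction j using Fin.lastCases with
  | last => simp [(Fin.castSucc_lt_last i).ne']
  | cast j =>
    constructor
    · intro h
      exact Or.inr ⟨j, fun he => h (by rw [he]), rfl⟩
    · rintro (h | ⟨j', hj', hej⟩)
      · exact absurd h.symm (Fin.castSucc_lt_last j).ne'
      · rw [← hej]
        exact fun he => hj' (Fin.castSucc_injective _ he)

lemma dd_rec {K : Type*} [Field K] (n m : ℕ) (x : Fin (n+2) → K)
    (hx : ∀ i j, i ≠ j → x i ≠ x j) :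
    ∑ i : Fin (n+2), x i ^ (m+1) / ∏ j ∈ Finset.univ.erase i, (x i - x j)
      = x (Fin.last (n+1)) * ∑ i : Fin (n+2), x i ^ m / ∏ j ∈ Finset.univ.erase i, (x i - x j)
        + ∑ i : Fin (n+1), (x i.castSucc) ^ m /
            ∏ j ∈ Finset.univ.erase i, (x i.castSucc - x j.castSucc) := by
  have key : ∀ i : Fin (n+2), x i ^ (m+1) / ∏ j ∈ Finset.univ.erase i, (x i - x j)
      = x (Fin.last (n+1)) * (x i ^ m / ∏ j ∈ Finset.univ.erase i, (x i - x j))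
        + x i ^ m * (x i - x (Fin.last (n+1))) / ∏ j ∈ Finset.univ.erase i, (x i - x j) := by
    intro i
    rw [← mul_div_assoc, ← add_div]
    congr 1
    ring
  rw [Finset.sum_congr rfl (fun i _ => key i), Finset.sum_add_distrib, ← Finset.mul_sum]
  congr 1
  rw [Fin.sum_univ_castSucc]
  simp only [sub_self, mul_zero, zero_div, add_zero]
  refine Finset.sum_congr rfl fun i _ => ?_
  have hprod : ∏ j ∈ Finset.univ.erase i.castSucc, (x i.castSucc - x j)
      = (x i.castSucc - x (Fin.last (n+1))) *
          ∏ j ∈ Finset.univ.erase i, (x i.castSucc - x j.castSucc) := by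
    rw [erase_castSucc, Finset.prod_insert (notin_map_castSucc n _), Finset.prod_map]
    rfl
  rw [hprod, mul_comm (x i.castSucc - x (Fin.last (n+1)))
    (∏ j ∈ Finset.univ.erase i, (x i.castSucc - x j.castSucc))]
  exact mul_div_mul_right _ _ (sub_ne_zero_of_ne (hx _ _ (Fin.castSucc_lt_last i).ne))

lemma mono_rec {K : Type*} [Field K] (n k : ℕ) (x : Fin (n+1) → K) :
    ∑ t ∈ Finset.univ.filter
        (fun t : Fin (k+1) → Fin (n+1) => ∀ a b, a ≤ b → t a ≤ t b),
      ∏ j : Fin (k+1), x (t j)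
    = (∑ t ∈ Finset.univ.filter
          (fun t : Fin (k+1) → Fin n => ∀ a b, a ≤ b → t a ≤ t b),
        ∏ j : Fin (k+1), x ((t j).castSucc))
      + x (Fin.last n) * ∑ t ∈ Finset.univ.filter
          (fun t : Fin k → Fin (n+1) => ∀ a b, a ≤ b → t a ≤ t b),
        ∏ j : Fin k, x (t j) := by
  classical
  rw [← Finset.sum_filter_add_sum_filter_not
    (Finset.univ.filter (fun t : Fin (k+1) → Fin (n+1) => ∀ a b, a ≤ b → t a ≤ t b))
    (fun t => t (Fin.last k) ≠ Fin.last n)]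
  congr 1
  · -- part A
    have hA : (Finset.univ.filter
          (fun t : Fin (k+1) → Fin (n+1) => ∀ a b, a ≤ b → t a ≤ t b)).filter
            (fun t => t (Fin.last k) ≠ Fin.last n)
        = (Finset.univ.filter
            (fun t : Fin (k+1) → Fin n => ∀ a b, a ≤ b → t a ≤ t b)).image
              (fun u => Fin.castSucc ∘ u) := by
      ext t
      simp only [mem_filter, mem_univ, true_and, mem_image]
      constructor
      · rintro ⟨hP, hne⟩
        have hlt : ∀ a, t a ≠ Fin.last n := fun a he =>
          hne (le_antisymm (Fin.le_last _) (he ▸ hP a (Fin.last k) (Fin.le_last a)))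
        refine ⟨fun a => (t a).castPred (hlt a), fun a b hab => ?_, funext fun a => ?_⟩
        · exact Fin.castPred_le_castPred_iff.mpr (hP a b hab)
        · exact Fin.castSucc_castPred _ _
      · rintro ⟨u, hu, rfl⟩
        exact ⟨fun a b hab => Fin.castSucc_le_castSucc_iff.mpr (hu a b hab),
          (Fin.castSucc_lt_last _).ne⟩
    have hinj : ∀ u ∈ (Finset.univ.filter
            (fun t : Fin (k+1) → Fin n => ∀ a b, a ≤ b → t a ≤ t b)),
        ∀ v ∈ (Finset.univ.filter
            (fun t : Fin (k+1) → Fin n => ∀ a b, a ≤ b → t a ≤ t b)),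
        (Fin.castSucc ∘ u) = (Fin.castSucc ∘ v) → u = v := by
      intro u _ v _ h
      funext a
      exact Fin.castSucc_injective _ (congrFun h a)
    rw [hA, Finset.sum_image hinj]
    exact Finset.sum_congr rfl fun u _ => rfl
  · -- part B
    have hB : (Finset.univ.filter
          (fun t : Fin (k+1) → Fin (n+1) => ∀ a b, a ≤ b → t a ≤ t b)).filter
            (fun t => ¬ t (Fin.last k) ≠ Fin.last n)
        = (Finset.univ.filter
            (fun t : Fin k → Fin (n+1) => ∀ a b, a ≤ b → t a ≤ t b)).image
              (fun u => Fin.snoc u (Fin.last n)) := by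
      ext t
      simp only [mem_filter, mem_univ, true_and, mem_image, not_not]
      constructor
      · rintro ⟨hP, hlast⟩
        refine ⟨fun a => t a.castSucc,
          fun a b hab => hP _ _ (Fin.castSucc_le_castSucc_iff.mpr hab),
          funext fun a => ?_⟩
        induction a using Fin.lastCases with
        | last => simpa [Fin.snoc_last] using hlast.symm
        | cast j => simp [Fin.snoc_castSucc]
      · rintro ⟨u, hu, rfl⟩
        refine ⟨fun a b hab => ?_, Fin.snoc_last _ _⟩
        induction b using Fin.lastCases with
        | last => simp only [Fin.snoc_last]; exact Fin.le_last _
        | cast j =>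
          induction a using Fin.lastCases with
          | last => exact (lt_irrefl _ (lt_of_le_of_lt hab (Fin.castSucc_lt_last j))).elim
          | cast a' =>
            simp only [Fin.snoc_castSucc]
            exact hu a' j (Fin.castSucc_le_castSucc_iff.mp hab)
    have hinj2 : ∀ u ∈ (Finset.univ.filter
            (fun t : Fin k → Fin (n+1) => ∀ a b, a ≤ b → t a ≤ t b)),
        ∀ v ∈ (Finset.univ.filter
            (fun t : Fin k → Fin (n+1) => ∀ a b, a ≤ b → t a ≤ t b)),
        (Fin.snoc u (Fin.last n) : Fin (k+1) → Fin (n+1)) = Fin.snoc v (Fin.last n) → u = v := by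
      intro u _ v _ h
      funext a
      have := congrFun h a.castSucc
      simpa [Fin.snoc_castSucc] using this
    rw [hB, Finset.sum_image hinj2, Finset.mul_sum]
    refine Finset.sum_congr rfl fun u _ => ?_
    rw [Fin.prod_univ_castSucc]
    simp [Fin.snoc_castSucc, Fin.snoc_last, mul_comm]

lemma mono_zero {K : Type*} [Field K] (n : ℕ) (x : Fin n → K) :
    ∑ t ∈ Finset.univ.filter
        (fun t : Fin 0 → Fin n => ∀ a b, a ≤ b → t a ≤ t b),
      ∏ j : Fin 0, x (t j) = 1 := by
  rw [Finset.filter_true_of_mem (fun t _ => fun a b _ => a.elim0)]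
  simp

lemma mono_one {K : Type*} [Field K] (k : ℕ) (x : Fin 1 → K) :
    ∑ t ∈ Finset.univ.filter
        (fun t : Fin k → Fin 1 => ∀ a b, a ≤ b → t a ≤ t b),
      ∏ j : Fin k, x (t j) = x 0 ^ k := by
  rw [Finset.filter_true_of_mem (fun t _ => fun a b _ =>
    le_of_eq (Subsingleton.elim _ _))]
  have h1 : (Finset.univ : Finset (Fin k → Fin 1)) = {fun _ => 0} := by
    ext t
    simp [funext_iff, Fin.eq_zero]
  rw [h1, Finset.sum_singleton]
  simp [Finset.prod_const]

/-- `x_1^m ∂_1 ⋯ ∂_{n-1} = h_{m-n+1}`: the sum `∑_i x_i^m / ∏_{j≠i}(x_i - x_j)` equals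
the complete homogeneous symmetric polynomial `h_{m-n+1}(x_1, …, x_n)`, where `h_k = 0`
for `k < 0` and `h_0 = 1`.  The complete homogeneous polynomial `h_k` is encoded as a sum
over monotone maps `t : Fin k → Fin n` (weakly increasing `k`-tuples of indices). -/
theorem divided_difference_power {K : Type*} [Field K] (n m : ℕ) (hn : 1 ≤ n)
    (x : Fin n → K) (hx : ∀ i j, i ≠ j → x i ≠ x j) :
    ∑ i : Fin n, x i ^ m / ∏ j ∈ Finset.univ.erase i, (x i - x j) =
      if m + 1 < n then 0
      else
        ∑ t ∈ Finset.univ.filter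
            (fun t : Fin (m + 1 - n) → Fin n => ∀ a b, a ≤ b → t a ≤ t b),
          ∏ k : Fin (m + 1 - n), x (t k) := by
  induction m generalizing n x with
  | zero =>
    match n, hn with
    | 1, _ =>
      rw [if_neg (by omega)]
      rw [show (0:ℕ) + 1 - 1 = 0 from rfl, mono_zero]
      simp [Finset.erase_eq_empty_iff]
    | (n' + 2), _ =>
      rw [if_pos (by omega)]
      simp only [pow_zero]
      exact dd_zero n' x hx
  | succ m ih =>
    match n, hn with
    | 1, _ =>
      rw [if_neg (by omega), show m + 1 + 1 - 1 = m + 1 from rfl, mono_one]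
      simp [Finset.erase_eq_empty_iff, Fin.eq_zero]
    | (n' + 2), _ =>
      have hx' : ∀ i j : Fin (n' + 1), i ≠ j →
          (x ∘ Fin.castSucc) i ≠ (x ∘ Fin.castSucc) j := fun i j hij =>
        hx _ _ (fun h => hij (Fin.castSucc_injective _ h))
      have h1 := ih (n' + 2) (by omega) x hx
      have h2 := ih (n' + 1) (by omega) (x ∘ Fin.castSucc) hx'
      rw [dd_rec n' m x hx, h1]
      simp only [Function.comp] at h2
      rw [h2]
      rcases lt_trichotomy m n' with hm | hm | hm
      · rw [if_pos (by omega), if_pos (by omega), if_pos (by omega)]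
        ring
      · subst hm
        rw [if_pos (by omega), if_neg (by omega), if_neg (by omega)]
        rw [show m + 1 - (m + 1) = 0 from by omega, show m + 1 + 1 - (m + 2) = 0 from by omega,
          mono_zero (m + 2) x, mono_zero (m + 1) (fun i : Fin (m + 1) => x i.castSucc)]
        ring
      · rw [if_neg (by omega), if_neg (by omega), if_neg (by omega)]
        rw [show m + 1 - (n' + 2) = m - n' - 1 from by omega,
          show m + 1 - (n' + 1) = (m - n' - 1) + 1 from by omega,
          show m + 1 + 1 - (n' + 2) = (m - n' - 1) + 1 from by omega]
        rw [mono_rec (n' + 1) (m - n' - 1) x]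
        ring
end

section
/- Let n ≥ 1 and let a,b,c,z,q be such that c-zq^i ≠ 0 for 1 ≤ i ≤ n, az-bc ≠ 0, and q^i are pairwise distinct. Then sum_{i=1}^n (a-bq^i)/(c-zq^i) = [c^n (zq/c;q)_n / ((q;q)_n (az-bc)^{n-1})] · sum_{i=1}^n [n choose i]_q (-1)^(i-1) q^(binom(i+1,2)-ni) (1-q^i) (a-bq^i)^n / (c-zq^i)^2. (Special case m=n of Proposition 1.) -/
open Finset in
lemma prod_Icc_one_shift {M : Type*} [CommMonoid M] (f : ℕ → M) (n : ℕ) :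
    ∏ j ∈ Finset.Icc 1 n, f j = ∏ j ∈ Finset.range n, f (j + 1) := by
  rw [← Finset.Ico_add_one_right_eq_Icc, Finset.prod_Ico_eq_prod_range]
  exact Finset.prod_congr rfl fun j _ => by rw [Nat.add_comm]

lemma qPoch_qq {K : Type*} [Field K] (q : K) (n : ℕ) :
    qPoch q q n = ∏ j ∈ Finset.range n, (1 - q ^ (j + 1)) := by
  unfold qPoch
  exact Finset.prod_congr rfl fun j _ => by rw [← pow_succ']

lemma qPoch_qq_ne_zero {K : Type*} [Field K] {q : K} {n m : ℕ} (hm : m ≤ n)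
    (hq1 : ∀ j : ℕ, 1 ≤ j → j ≤ n → q ^ j ≠ 1) : qPoch q q m ≠ 0 := by
  rw [qPoch_qq]
  rw [Finset.prod_ne_zero_iff]
  intro j hj
  simp only [Finset.mem_range] at hj
  exact sub_ne_zero_of_ne (Ne.symm (hq1 (j+1) (by omega) (by omega)))

open Finset in
lemma prod_q_diff {K : Type*} [Field K] (q : K) (n i : ℕ) (h1 : 1 ≤ i) (h2 : i ≤ n) :
    ∏ j ∈ (Finset.Icc 1 n).erase i, (q ^ i - q ^ j)
      = (-1 : K) ^ (i - 1) * q ^ ((i - 1) * i / 2 + i * (n - i))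
          * (qPoch q q (i - 1) * qPoch q q (n - i)) := by
  obtain ⟨k, rfl⟩ : ∃ k, i = k + 1 := ⟨i - 1, by omega⟩
  simp only [Nat.add_sub_cancel]
  have hsplit : (Finset.Icc 1 n).erase (k + 1) = Finset.Icc 1 k ∪ Finset.Icc (k + 2) n := by
    ext j; simp only [mem_erase, mem_Icc, mem_union]; omega
  have hdisj : Disjoint (Finset.Icc 1 k) (Finset.Icc (k + 2) n) := by
    rw [Finset.disjoint_left]; intro j hj hj'
    simp only [mem_Icc] at hj hj'; omega
  rw [hsplit, Finset.prod_union hdisj]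
  have hA1 : ∏ j ∈ Finset.Icc 1 k, (q ^ (k + 1) - q ^ j)
      = (-1 : K) ^ k * q ^ (k * (k + 1) / 2) * qPoch q q k := by
    rw [prod_Icc_one_shift]
    have hterm : ∀ j ∈ Finset.range k, q ^ (k + 1) - q ^ (j + 1)
        = (-1) * q ^ (j + 1) * (1 - q ^ (k - j)) := by
      intro j hj
      simp only [Finset.mem_range] at hj
      have he : (j + 1) + (k - j) = k + 1 := by omega
      rw [← he, pow_add]; ring
    rw [Finset.prod_congr rfl hterm, Finset.prod_mul_distrib, Finset.prod_mul_distrib,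
      Finset.prod_const, card_range, Finset.prod_pow_eq_pow_sum]
    have hsum : ∑ j ∈ Finset.range k, (j + 1) = k * (k + 1) / 2 := by
      have h1 := Finset.sum_range_id_mul_two (k + 1)
      have h2 : ∑ j ∈ Finset.range (k + 1), j = ∑ j ∈ Finset.range k, (j + 1) := by
        rw [Finset.sum_range_succ']; simp
      have h3 : (k * (k + 1) / 2) * 2 = k * (k + 1) :=
        Nat.div_mul_cancel (Nat.even_mul_succ_self k).two_dvd
      have h1' : (∑ j ∈ Finset.range (k + 1), j) * 2 = k * (k + 1) := by
        simpa [Nat.mul_comm] using h1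
      have h4 : (∑ j ∈ Finset.range k, (j + 1)) * 2 = k * (k + 1) := by
        rw [← h2, h1']
      exact Nat.eq_of_mul_eq_mul_right (by norm_num) (h4.trans h3.symm)
    have hrefl : ∏ j ∈ Finset.range k, (1 - q ^ (k - j)) = qPoch q q k := by
      rw [qPoch_qq, ← Finset.prod_range_reflect (fun j => 1 - q ^ (j + 1)) k]
      refine Finset.prod_congr rfl fun j hj => ?_
      simp only [Finset.mem_range] at hj
      have he : k - 1 - j + 1 = k - j := by omega
      show (1 : K) - q ^ (k - j) = 1 - q ^ (k - 1 - j + 1)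
      rw [he]
    rw [hsum, hrefl]
  have hA2 : ∏ j ∈ Finset.Icc (k + 2) n, (q ^ (k + 1) - q ^ j)
      = q ^ ((k + 1) * (n - (k + 1))) * qPoch q q (n - (k + 1)) := by
    rw [← Finset.Ico_add_one_right_eq_Icc, Finset.prod_Ico_eq_prod_range,
      show n + 1 - (k + 2) = n - (k + 1) from by omega]
    have hterm : ∀ j ∈ Finset.range (n - (k + 1)), q ^ (k + 1) - q ^ (k + 2 + j)
        = q ^ (k + 1) * (1 - q ^ (j + 1)) := by
      intro j hj
      have he : (k + 1) + (j + 1) = k + 2 + j := by omega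
      rw [← he, pow_add]; ring
    rw [Finset.prod_congr rfl hterm, Finset.prod_mul_distrib, Finset.prod_const, card_range,
      ← pow_mul, qPoch_qq]
  rw [hA1, hA2]; ring

open Finset in
lemma coeff_key {K : Type*} [Field K] (q : K) (n i : ℕ) (h1 : 1 ≤ i) (h2 : i ≤ n)
    (hq0 : q ≠ 0) (hq1 : ∀ j : ℕ, 1 ≤ j → j ≤ n → q ^ j ≠ 1) :
    gauss q n i * (-1 : K) ^ (i - 1) * q ^ (((i * (i + 1) / 2 : ℕ) : ℤ) - (n : ℤ) * (i : ℤ))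
      * (1 - q ^ i) * ∏ j ∈ (Finset.Icc 1 n).erase i, (q ^ i - q ^ j) = qPoch q q n := by
  rw [prod_q_diff q n i h1 h2]
  have hpq1 : qPoch q q (i - 1) ≠ 0 := qPoch_qq_ne_zero (by omega) hq1
  have hpq2 : qPoch q q (n - i) ≠ 0 := qPoch_qq_ne_zero (by omega) hq1
  have hqi : (1 : K) - q ^ i ≠ 0 := sub_ne_zero_of_ne (Ne.symm (hq1 i h1 h2))
  have hsplit : qPoch q q i = qPoch q q (i - 1) * (1 - q ^ i) := by
    obtain ⟨k, rfl⟩ : ∃ k, i = k + 1 := ⟨i - 1, by omega⟩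
    rw [qPoch_qq, qPoch_qq, Finset.prod_range_succ]
    simp
  have hX2 : ((i - 1) * i / 2) * 2 = (i - 1) * i := by
    refine Nat.div_mul_cancel ?_
    obtain ⟨k, rfl⟩ : ∃ k, i = k + 1 := ⟨i - 1, by omega⟩
    simpa using (Nat.even_mul_succ_self k).two_dvd
  have hT2 : (i * (i + 1) / 2) * 2 = i * (i + 1) :=
    Nat.div_mul_cancel (Nat.even_mul_succ_self i).two_dvd
  have hnat : (i * (i + 1) / 2 + ((i - 1) * i / 2 + i * (n - i))) * 2 = n * i * 2 := by
    rw [add_mul, add_mul, hT2, hX2]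
    obtain ⟨d, rfl⟩ : ∃ d, n = i + d := ⟨n - i, by omega⟩
    obtain ⟨k, rfl⟩ : ∃ k, i = k + 1 := ⟨i - 1, by omega⟩
    have e1 : k + 1 - 1 = k := by omega
    have e2 : k + 1 + d - (k + 1) = d := by omega
    rw [e1, e2]; ring
  have hnat' : i * (i + 1) / 2 + ((i - 1) * i / 2 + i * (n - i)) = n * i :=
    Nat.eq_of_mul_eq_mul_right (by norm_num) hnat
  have hcast : ((i * (i + 1) / 2 : ℕ) : ℤ) + (((i - 1) * i / 2 + i * (n - i) : ℕ) : ℤ)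
      = (n : ℤ) * i := by exact_mod_cast congrArg (Nat.cast : ℕ → ℤ) hnat'
  have hEX : q ^ (((i * (i + 1) / 2 : ℕ) : ℤ) - (n : ℤ) * (i : ℤ))
      * q ^ ((i - 1) * i / 2 + i * (n - i)) = 1 := by
    rw [← zpow_natCast q ((i - 1) * i / 2 + i * (n - i)), ← zpow_add₀ hq0,
      show (((i * (i + 1) / 2 : ℕ) : ℤ) - (n : ℤ) * (i : ℤ))
        + (((i - 1) * i / 2 + i * (n - i) : ℕ) : ℤ) = 0 from by linarith [hcast], zpow_zero]
  have hs1 : (-1 : K) ^ (i - 1) * (-1 : K) ^ (i - 1) = 1 := by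
    rw [← pow_add, ← two_mul, pow_mul]; norm_num
  unfold gauss
  rw [hsplit]
  set qE := q ^ (((i * (i + 1) / 2 : ℕ) : ℤ) - (n : ℤ) * (i : ℤ)) with hqE
  set qX := q ^ ((i - 1) * i / 2 + i * (n - i)) with hqX
  set s1 := (-1 : K) ^ (i - 1) with hs1d
  have hDn : qPoch q q (i - 1) * (1 - q ^ i) * qPoch q q (n - i) ≠ 0 :=
    mul_ne_zero (mul_ne_zero hpq1 hqi) hpq2
  rw [div_eq_mul_inv]
  linear_combination (qPoch q q n * (qPoch q q (i - 1) * (1 - q ^ i) * qPoch q q (n - i))⁻¹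
      * (qPoch q q (i - 1) * (1 - q ^ i) * qPoch q q (n - i)) * qE * qX) * hs1
    + (qPoch q q n * (qPoch q q (i - 1) * (1 - q ^ i) * qPoch q q (n - i))⁻¹
      * (qPoch q q (i - 1) * (1 - q ^ i) * qPoch q q (n - i))) * hEX
    + qPoch q q n * mul_inv_cancel₀ hDn
open Polynomial Finset in
theorem lagrange_sum_pow {K : Type*} [Field K] {ι : Type*} [DecidableEq ι]
    (s : Finset ι) (v : ι → K) (hs : s.Nonempty) (hv : Set.InjOn v s) :
    ∑ i ∈ s, (v i) ^ s.card / ∏ j ∈ s.erase i, (v i - v j) = ∑ i ∈ s, v i := by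
  have hcard : 0 < s.card := hs.card_pos
  set g : K[X] := X ^ s.card - Lagrange.nodal s v with hgdef
  have hdeg : g.degree < (s.card : WithBot ℕ) := by
    have h1 : (X ^ s.card : K[X]).degree = s.card := degree_X_pow _
    have h2 := degree_sub_lt (p := (X ^ s.card : K[X])) (q := Lagrange.nodal s v)
      (by rw [h1, Lagrange.degree_nodal]) (pow_ne_zero _ X_ne_zero)
      (by rw [(monic_X_pow _).leadingCoeff, Lagrange.nodal_monic.leadingCoeff])
    rwa [h1] at h2
  have hg_eval : ∀ i ∈ s, g.eval (v i) = (v i) ^ s.card := by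
    intro i hi
    simp [hgdef, Lagrange.eval_nodal_at_node hi]
  have hinterp := Lagrange.eq_interpolate_of_eval_eq (f := g)
    (r := fun i => (v i) ^ s.card) hv hdeg hg_eval
  have hnodalcoeff : (Lagrange.nodal s v).coeff (s.card - 1) = -∑ i ∈ s, v i := by
    have h3 := prod_X_sub_C_nextCoeff (s := s) v
    rw [← Lagrange.nodal_eq, nextCoeff_of_natDegree_pos
      (by rw [Lagrange.natDegree_nodal]; exact hcard), Lagrange.natDegree_nodal] at h3
    exact h3
  have hcoeffg : g.coeff (s.card - 1) = ∑ i ∈ s, v i := by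
    rw [hgdef, coeff_sub, coeff_X_pow, if_neg (by omega), hnodalcoeff]
    ring
  have hbasis : ∀ i ∈ s, (Lagrange.basis s v i).coeff (s.card - 1)
      = (∏ j ∈ s.erase i, (v i - v j))⁻¹ := by
    intro i hi
    rw [Lagrange.basis_eq_prod_sub_inv_mul_nodal_div hi,
      ← Lagrange.nodal_erase_eq_nodal_div hi, coeff_C_mul]
    have hone : (Lagrange.nodal (s.erase i) v).coeff (s.card - 1) = 1 := by
      have hdeg' : (Lagrange.nodal (s.erase i) v).natDegree = s.card - 1 := by
        rw [Lagrange.natDegree_nodal, card_erase_of_mem hi]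
      rw [← hdeg']
      exact Lagrange.nodal_monic.coeff_natDegree
    rw [hone, mul_one, Lagrange.nodalWeight, prod_inv_distrib]
  calc ∑ i ∈ s, (v i) ^ s.card / ∏ j ∈ s.erase i, (v i - v j)
      = ∑ i ∈ s, (v i) ^ s.card * (∏ j ∈ s.erase i, (v i - v j))⁻¹ := by
        simp [div_eq_mul_inv]
    _ = (Lagrange.interpolate s v (fun i => (v i) ^ s.card)).coeff (s.card - 1) := by
        rw [Lagrange.interpolate_apply, finset_sum_coeff]
        exact (sum_congr rfl fun i hi => by rw [coeff_C_mul, hbasis i hi]).symm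
    _ = g.coeff (s.card - 1) := by rw [← hinterp]
    _ = ∑ i ∈ s, v i := hcoeffg

/-- The special case `m = n` of Proposition 1. -/
theorem proposition_one_special {K : Type*} [Field K] (a b c z q : K) (n : ℕ)
    (hn : 1 ≤ n)
    (hc : c ≠ 0) (hq0 : q ≠ 0) (hq1 : ∀ i : ℕ, 1 ≤ i → i ≤ n → q ^ i ≠ 1)
    (hden : ∀ i : ℕ, 1 ≤ i → i ≤ n → c - z * q ^ i ≠ 0)
    (habzc : a * z - b * c ≠ 0)
    (hdist : ∀ i j : ℕ, 1 ≤ i → i ≤ n → 1 ≤ j → j ≤ n → i ≠ j → q ^ i ≠ q ^ j) :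
    ∑ i ∈ Finset.Icc 1 n, (a - b * q ^ i) / (c - z * q ^ i) =
      (c ^ n * qPoch (z * q / c) q n / (qPoch q q n * (a * z - b * c) ^ (n - 1))) *
        ∑ i ∈ Finset.Icc 1 n,
          gauss q n i * (-1 : K) ^ (i - 1) *
            q ^ (((i * (i + 1) / 2 : ℕ) : ℤ) - (n : ℤ) * (i : ℤ)) * (1 - q ^ i) *
            (a - b * q ^ i) ^ n / (c - z * q ^ i) ^ 2 := by
  classical
  obtain ⟨m, rfl⟩ : ∃ m, n = m + 1 := ⟨n - 1, by omega⟩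
  simp only [Nat.add_sub_cancel]
  set s : Finset ℕ := Finset.Icc 1 (m + 1) with hs
  have hcard : s.card = m + 1 := by simp [hs]
  set v : ℕ → K := fun i => (a - b * q ^ i) / (c - z * q ^ i) with hv
  -- difference formula
  have hsub : ∀ i ∈ s, ∀ j ∈ s, v i - v j
      = (a * z - b * c) * (q ^ i - q ^ j) / ((c - z * q ^ i) * (c - z * q ^ j)) := by
    intro i hi j hj
    simp only [hs, Finset.mem_Icc] at hi hj
    have hdi := hden i hi.1 hi.2
    have hdj := hden j hj.1 hj.2
    rw [hv]
    show (a - b * q ^ i) / (c - z * q ^ i) - (a - b * q ^ j) / (c - z * q ^ j) = _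
    rw [div_sub_div _ _ hdi hdj]
    ring
  have hinj : Set.InjOn v s := by
    intro i hi j hj hij
    simp only [Finset.coe_Icc, Set.mem_Icc, hs] at hi hj
    by_contra hne
    have h0 : v i - v j = 0 := by rw [hij]; ring
    rw [hsub i (by simp [hs, Finset.mem_Icc]; omega) j (by simp [hs, Finset.mem_Icc]; omega)] at h0
    have hqq : q ^ i - q ^ j ≠ 0 :=
      sub_ne_zero_of_ne (hdist i j hi.1 hi.2 hj.1 hj.2 hne)
    have := div_eq_zero_iff.mp h0
    rcases this with h | h
    · rcases mul_eq_zero.mp h with h' | h'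
      · exact habzc h'
      · exact hqq h'
    · exact mul_ne_zero (hden i hi.1 hi.2) (hden j hj.1 hj.2) h
  have key := lagrange_sum_pow s v ⟨1, by simp [hs]⟩ hinj
  rw [hcard] at key
  have hL : ∑ i ∈ Finset.Icc 1 (m + 1), (a - b * q ^ i) / (c - z * q ^ i)
      = ∑ i ∈ s, (v i) ^ (m + 1) / ∏ j ∈ s.erase i, (v i - v j) := key.symm
  rw [hL, Finset.mul_sum]
  refine Finset.sum_congr rfl fun i hi => ?_
  have hiI : i ∈ Finset.Icc 1 (m + 1) := hi
  simp only [Finset.mem_Icc] at hiI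
  obtain ⟨hi1, hi2⟩ := hiI
  -- notation
  have hvi : c - z * q ^ i ≠ 0 := hden i hi1 hi2
  have hw : a * z - b * c ≠ 0 := habzc
  set Q : K := ∏ j ∈ s.erase i, (q ^ i - q ^ j) with hQdef
  set R : K := ∏ j ∈ s.erase i, (c - z * q ^ j) with hRdef
  have hQ0 : Q ≠ 0 := by
    rw [hQdef, Finset.prod_ne_zero_iff]
    intro j hj
    rw [Finset.mem_erase, hs, Finset.mem_Icc] at hj
    exact sub_ne_zero_of_ne (hdist i j hi1 hi2 hj.2.1 hj.2.2 (Ne.symm hj.1))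
  have hR0 : R ≠ 0 := by
    rw [hRdef, Finset.prod_ne_zero_iff]
    intro j hj
    rw [Finset.mem_erase, hs, Finset.mem_Icc] at hj
    exact hden j hj.2.1 hj.2.2
  have hcarde : (s.erase i).card = m := by
    rw [Finset.card_erase_of_mem hi, hcard]
    omega
  -- product of differences
  have hprod : ∏ j ∈ s.erase i, (v i - v j)
      = (a * z - b * c) ^ m * Q / ((c - z * q ^ i) ^ m * R) := by
    have h0 : ∏ j ∈ s.erase i, (v i - v j) = ∏ j ∈ s.erase i,
        ((a * z - b * c) * (q ^ i - q ^ j) / ((c - z * q ^ i) * (c - z * q ^ j))) :=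
      Finset.prod_congr rfl fun j hj => hsub i hi j (Finset.mem_of_mem_erase hj)
    rw [h0, Finset.prod_div_distrib, Finset.prod_mul_distrib, Finset.prod_mul_distrib,
      Finset.prod_const, Finset.prod_const, hcarde]
  -- D = (c - z q) ... product over Icc
  have hD : c ^ (m + 1) * qPoch (z * q / c) q (m + 1)
      = (c - z * q ^ i) * R := by
    have h1 : ∏ j ∈ Finset.Icc 1 (m + 1), (c - z * q ^ j)
        = c ^ (m + 1) * qPoch (z * q / c) q (m + 1) := by
      rw [prod_Icc_one_shift (fun j => c - z * q ^ j) (m + 1)]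
      have hterm : ∀ j ∈ Finset.range (m + 1),
          c - z * q ^ (j + 1) = c * (1 - (z * q / c) * q ^ j) := by
        intro j hj
        field_simp
        ring
      rw [Finset.prod_congr rfl hterm, Finset.prod_mul_distrib, Finset.prod_const,
        Finset.card_range, qPoch]
    rw [← h1, ← Finset.mul_prod_erase s (fun j => c - z * q ^ j) hi]
  have hK := coeff_key q (m + 1) i hi1 hi2 hq0 hq1
  rw [← hQdef] at hK
  have hpqn : qPoch q q (m + 1) ≠ 0 := qPoch_qq_ne_zero le_rfl hq1
  have hG : gauss q (m + 1) i * (-1 : K) ^ (i - 1)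
      * q ^ (((i * (i + 1) / 2 : ℕ) : ℤ) - ((m + 1 : ℕ) : ℤ) * (i : ℤ)) * (1 - q ^ i)
      = qPoch q q (m + 1) / Q := by
    rw [eq_div_iff hQ0]; exact hK
  rw [hprod, hD, hG]
  simp only [hv]
  have hwm : (a * z - b * c) ^ m ≠ 0 := pow_ne_zero _ habzc
  have hvim : (c - z * q ^ i) ^ m ≠ 0 := pow_ne_zero _ hvi
  rw [div_pow]
  field_simp
  have hv' : c - q ^ i * z ≠ 0 := by rwa [mul_comm (q ^ i)]
  rw [div_eq_div_iff (pow_ne_zero _ hv') hv']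
  ring
end
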